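/- Sign of the overall effect in the Markov case: let (λ⋆⁰, λ₀⁰, λ₁⁰) and (λ⋆¹, λ₀¹, λ₁¹) be two triples of continuous nonnegative hazards (Markov case) with λ⋆¹ ≤ λ⋆⁰, λ₀¹ ≤ λ₀⁰ and λ₁¹ ≤ λ₁⁰ pointwise on [0,∞), and suppose λ₁¹(t) ≥ λ₀¹(t) for all t ≥ 0. Let F⁰ and F¹ be the counterfactual cumulative incidence functions associated with the two triples. Then F¹(t) ≤ F⁰(t) for all t ≥ 0, i.e. the overall effect F¹(t) − F⁰(t) is nonpositive at every time. -/

import Mathlib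

open MeasureTheory ProbabilityTheory Filter Set

/-!
In the Markov case `Λ₁(t,s) = Λ₁(t) - Λ₁(s)`, and two applications of the fundamental theorem
of calculus (to `e^{-Λ₀-Λ⋆}` and `e^{Λ₁-Λ₀-Λ⋆}`) give the closed form
`F(t) = 1 - e^{-Λ₁(t)} (1 + ∫₀ᵗ (λ₁ - λ₀) e^{Λ₁-Λ₀-Λ⋆})`.
Passing from `(λ⋆⁰, λ₀⁰)` to `(λ⋆¹, λ₀¹)` with `λ₁ = λ₁¹` fixed can only increase the integrand,
because `λ₁¹ - λ₀¹ ≥ 0` and `λ₁¹ - λ₀¹ ≥ λ₁¹ - λ₀⁰`, so `F` decreases. Raising `λ₁` from `λ₁¹`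
to `λ₁⁰` with the other hazards fixed increases `1 - e^{-Λ₁(t,s)}`, hence increases `F` since
`λ⋆⁰ ≥ 0`. The hazards are extended constantly to `(-∞, 0)` so that they are continuous on `ℝ`.
-/

/-- Cumulative hazard `Λ(t) = ∫₀ᵗ λ(u) du`. -/
noncomputable def cumHaz (lam : ℝ → ℝ) (t : ℝ) : ℝ := ∫ u in (0:ℝ)..t, lam u

/-- Post-intermediate cumulative hazard `Λ₁(t,s) = ∫ₛᵗ λ₁(u,s) du`. -/
noncomputable def cumHaz1 (lam1 : ℝ → ℝ → ℝ) (t s : ℝ) : ℝ := ∫ u in s..t, lam1 u s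

/-- The counterfactual cumulative incidence function
`F(t) = ∫₀ᵗ e^{−Λ₀(s)−Λ⋆(s)} λ₀(s) ds + ∫₀ᵗ e^{−Λ₀(s)−Λ⋆(s)} λ⋆(s) (1 − e^{−Λ₁(t,s)}) ds`. -/
noncomputable def cif (lamS lam0 : ℝ → ℝ) (lam1 : ℝ → ℝ → ℝ) (t : ℝ) : ℝ :=
  (∫ s in (0:ℝ)..t, Real.exp (-cumHaz lam0 s - cumHaz lamS s) * lam0 s) +
  ∫ s in (0:ℝ)..t, Real.exp (-cumHaz lam0 s - cumHaz lamS s) * lamS s *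
    (1 - Real.exp (-cumHaz1 lam1 t s))

theorem integral_exp_mul_deriv {f f' : ℝ → ℝ} (hf : ∀ x, HasDerivAt f (f' x) x)
    (hf' : Continuous f') (a b : ℝ) :
    ∫ x in a..b, Real.exp (f x) * f' x = Real.exp (f b) - Real.exp (f a) :=
  intervalIntegral.integral_deriv_comp_mul_deriv (fun x _ => hf x)
    (fun x _ => Real.hasDerivAt_exp (f x)) hf'.continuousOn Real.continuous_exp

theorem mul_exp_le_mul_exp {x₀ x₁ y₀ y₁ : ℝ} (hx : x₀ ≤ x₁) (hx₁ : 0 ≤ x₁) (hy : y₀ ≤ y₁) :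
    x₀ * Real.exp y₀ ≤ x₁ * Real.exp y₁ := by
  rcases le_total x₀ 0 with hx₀ | hx₀
  · exact (mul_nonpos_of_nonpos_of_nonneg hx₀ (Real.exp_pos _).le).trans
      (mul_nonneg hx₁ (Real.exp_pos _).le)
  · exact mul_le_mul hx (Real.exp_le_exp.2 hy) (Real.exp_pos _).le hx₁

section CumulativeHazard

variable {f g : ℝ → ℝ}

theorem hasDerivAt_cumHaz (hf : Continuous f) (t : ℝ) : HasDerivAt (cumHaz f) (f t) t :=
  intervalIntegral.integral_hasDerivAt_right (hf.intervalIntegrable _ _)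
    (hf.stronglyMeasurableAtFilter _ _) hf.continuousAt

@[fun_prop]
theorem continuous_cumHaz (hf : Continuous f) : Continuous (cumHaz f) :=
  continuous_iff_continuousAt.2 fun t => (hasDerivAt_cumHaz hf t).continuousAt

@[simp]
theorem cumHaz_zero (f : ℝ → ℝ) : cumHaz f 0 = 0 := by
  simp [cumHaz]

theorem cumHaz_mono (hf : Continuous f) (hg : Continuous g) (hle : f ≤ g) {s : ℝ}
    (hs : 0 ≤ s) : cumHaz f s ≤ cumHaz g s :=
  intervalIntegral.integral_mono_on hs (hf.intervalIntegrable _ _) (hg.intervalIntegrable _ _)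
    fun u _ => hle u

theorem cumHaz_congr {s : ℝ} (hs : 0 ≤ s) (h : EqOn f g (Icc 0 s)) :
    cumHaz f s = cumHaz g s :=
  intervalIntegral.integral_congr (by rwa [uIcc_of_le hs])

theorem cumHaz1_markov (hf : Continuous f) (t s : ℝ) :
    cumHaz1 (fun u _ => f u) t s = cumHaz f t - cumHaz f s :=
  (intervalIntegral.integral_interval_sub_left (hf.intervalIntegrable _ _)
    (hf.intervalIntegrable _ _)).symm

end CumulativeHazard

section MarkovCIF

variable {a b c : ℝ → ℝ} {t : ℝ}

theorem cif_markov_congr {a' b' c' : ℝ → ℝ} (ht : 0 ≤ t) (ha : EqOn a a' (Icc 0 t))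
    (hb : EqOn b b' (Icc 0 t)) (hc : EqOn c c' (Icc 0 t)) :
    cif a b (fun u _ => c u) t = cif a' b' (fun u _ => c' u) t := by
  have hcum : ∀ s ∈ Icc 0 t, ∀ f f' : ℝ → ℝ, EqOn f f' (Icc 0 t) → cumHaz f s = cumHaz f' s :=
    fun s hs _ _ h => cumHaz_congr hs.1 (h.mono (Icc_subset_Icc_right hs.2))
  have hcum1 : ∀ s ∈ Icc 0 t,
      cumHaz1 (fun u _ => c u) t s = cumHaz1 (fun u _ => c' u) t s := fun s hs =>
    intervalIntegral.integral_congr fun u hu => hc <| by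
      rw [uIcc_of_le hs.2] at hu
      exact ⟨hs.1.trans hu.1, hu.2⟩
  unfold cif
  congr 1 <;> refine intervalIntegral.integral_congr fun s hs => ?_ <;> rw [uIcc_of_le ht] at hs
  · simp only [hcum s hs a a' ha, hcum s hs b b' hb, hb hs]
  · simp only [hcum s hs a a' ha, hcum s hs b b' hb, hcum1 s hs, ha hs]

theorem cif_markov_eq (ha : Continuous a) (hb : Continuous b) (hc : Continuous c) :
    cif a b (fun u _ => c u) t = 1 - Real.exp (-cumHaz c t) *
      (1 + ∫ s in (0:ℝ)..t,
        (c s - b s) * Real.exp (cumHaz c s - cumHaz b s - cumHaz a s)) := by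
  have hφ : ∫ s in (0:ℝ)..t, Real.exp (-cumHaz b s - cumHaz a s) * (-b s - a s)
      = Real.exp (-cumHaz b t - cumHaz a t) - 1 := by
    rw [integral_exp_mul_deriv (f := fun s => -cumHaz b s - cumHaz a s)
      (fun s => (hasDerivAt_cumHaz hb s).neg.sub (hasDerivAt_cumHaz ha s)) (by fun_prop)]
    simp
  have hψ : ∫ s in (0:ℝ)..t, Real.exp (cumHaz c s - cumHaz b s - cumHaz a s) * (c s - b s - a s)
      = Real.exp (cumHaz c t - cumHaz b t - cumHaz a t) - 1 := by
    rw [integral_exp_mul_deriv (f := fun s => cumHaz c s - cumHaz b s - cumHaz a s)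
      (fun s => ((hasDerivAt_cumHaz hc s).sub (hasDerivAt_cumHaz hb s)).sub
        (hasDerivAt_cumHaz ha s)) (by fun_prop)]
    simp
  have hshift : ∀ s, Real.exp (-cumHaz b s - cumHaz a s) * Real.exp (-(cumHaz c t - cumHaz c s))
      = Real.exp (-cumHaz c t) * Real.exp (cumHaz c s - cumHaz b s - cumHaz a s) := fun s => by
    rw [← Real.exp_add, ← Real.exp_add]; ring_nf
  have hexp : Real.exp (-cumHaz c t) * Real.exp (cumHaz c t - cumHaz b t - cumHaz a t)
      = Real.exp (-cumHaz b t - cumHaz a t) := by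
    rw [← Real.exp_add]; ring_nf
  have hint : ∀ {g : ℝ → ℝ}, Continuous g → IntervalIntegrable g volume 0 t :=
    fun hg => hg.intervalIntegrable _ _
  simp only [cif, cumHaz1_markov hc]
  rw [← intervalIntegral.integral_add (hint (by fun_prop)) (hint (by fun_prop)),
    intervalIntegral.integral_congr (g := fun s =>
      -(Real.exp (-cumHaz b s - cumHaz a s) * (-b s - a s)) - Real.exp (-cumHaz c t) *
        ((c s - b s) * Real.exp (cumHaz c s - cumHaz b s - cumHaz a s) -
          Real.exp (cumHaz c s - cumHaz b s - cumHaz a s) * (c s - b s - a s)))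
      fun s _ => by linear_combination (-a s) * hshift s]
  rw [intervalIntegral.integral_sub (hint (by fun_prop)) (hint (by fun_prop)),
    intervalIntegral.integral_neg, intervalIntegral.integral_const_mul,
    intervalIntegral.integral_sub (hint (by fun_prop)) (hint (by fun_prop)), hφ, hψ]
  linear_combination hexp

theorem cif_markov_mono_lam1 {c₀ c₁ : ℝ → ℝ} (ha : Continuous a) (hb : Continuous b)
    (hc₀ : Continuous c₀) (hc₁ : Continuous c₁) (ha_nonneg : 0 ≤ a) (hc : c₁ ≤ c₀) (ht : 0 ≤ t) :
    cif a b (fun u _ => c₁ u) t ≤ cif a b (fun u _ => c₀ u) t := by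
  have hint : ∀ {c : ℝ → ℝ}, Continuous c → IntervalIntegrable (fun s =>
      Real.exp (-cumHaz b s - cumHaz a s) * a s *
        (1 - Real.exp (-cumHaz1 (fun u _ => c u) t s))) volume 0 t := fun hc' => by
    simp only [cumHaz1_markov hc']
    exact Continuous.intervalIntegrable (by fun_prop) _ _
  refine add_le_add_right (intervalIntegral.integral_mono_on ht (hint hc₁) (hint hc₀)
    fun s hs => ?_) _
  have hcum1 : cumHaz1 (fun u _ => c₁ u) t s ≤ cumHaz1 (fun u _ => c₀ u) t s :=
    intervalIntegral.integral_mono_on hs.2 (hc₁.intervalIntegrable _ _)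
      (hc₀.intervalIntegrable _ _) fun u _ => hc u
  have : 0 ≤ a s := ha_nonneg s
  gcongr

theorem cif_markov_anti_lamS_lam0 {a₀ a₁ b₀ b₁ : ℝ → ℝ} (ha₀ : Continuous a₀)
    (ha₁ : Continuous a₁) (hb₀ : Continuous b₀) (hb₁ : Continuous b₁) (hc : Continuous c)
    (ha : a₁ ≤ a₀) (hb : b₁ ≤ b₀) (hbc : b₁ ≤ c) (ht : 0 ≤ t) :
    cif a₁ b₁ (fun u _ => c u) t ≤ cif a₀ b₀ (fun u _ => c u) t := by
  rw [cif_markov_eq ha₀ hb₀ hc, cif_markov_eq ha₁ hb₁ hc]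
  gcongr
  refine intervalIntegral.integral_mono_on ht (Continuous.intervalIntegrable (by fun_prop) _ _)
    (Continuous.intervalIntegrable (by fun_prop) _ _) fun s hs => ?_
  exact mul_exp_le_mul_exp (by linarith [hb s]) (sub_nonneg.2 (hbc s))
    (by linarith [cumHaz_mono ha₁ ha₀ ha hs.1, cumHaz_mono hb₁ hb₀ hb hs.1])

end MarkovCIF

def extendIci (f : ℝ → ℝ) (u : ℝ) : ℝ := f (max u 0)

theorem continuous_extendIci {f : ℝ → ℝ} (hf : ContinuousOn f (Ici 0)) :
    Continuous (extendIci f) :=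
  hf.comp_continuous (by fun_prop) fun u => mem_Ici.2 (le_max_right u 0)

theorem eqOn_extendIci (f : ℝ → ℝ) : EqOn (extendIci f) f (Ici 0) :=
  fun _ hu => congrArg f (max_eq_left hu)

theorem cif_overall_sign_markov_general (lamS0 lam00 lam10 lamS1 lam01 lam11 : ℝ → ℝ)
    (hS0cont : ContinuousOn lamS0 (Set.Ici 0))
    (h00cont : ContinuousOn lam00 (Set.Ici 0))
    (h10cont : ContinuousOn lam10 (Set.Ici 0))
    (hS1cont : ContinuousOn lamS1 (Set.Ici 0))
    (h01cont : ContinuousOn lam01 (Set.Ici 0))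
    (h11cont : ContinuousOn lam11 (Set.Ici 0))
    (hS0nn : ∀ t ∈ Set.Ici (0:ℝ), 0 ≤ lamS0 t)
    (hSle : ∀ t ∈ Set.Ici (0:ℝ), lamS1 t ≤ lamS0 t)
    (h0le : ∀ t ∈ Set.Ici (0:ℝ), lam01 t ≤ lam00 t)
    (h1le : ∀ t ∈ Set.Ici (0:ℝ), lam11 t ≤ lam10 t)
    (hmod : ∀ t ∈ Set.Ici (0:ℝ), lam01 t ≤ lam11 t) :
    ∀ t : ℝ, 0 ≤ t →
      cif lamS1 lam01 (fun u _ => lam11 u) t ≤ cif lamS0 lam00 (fun u _ => lam10 u) t := by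
  intro t ht
  have hext : ∀ a b c : ℝ → ℝ, cif (extendIci a) (extendIci b) (fun u _ => extendIci c u) t
      = cif a b (fun u _ => c u) t := fun a b c =>
    cif_markov_congr ht ((eqOn_extendIci a).mono Icc_subset_Ici_self)
      ((eqOn_extendIci b).mono Icc_subset_Ici_self) ((eqOn_extendIci c).mono Icc_subset_Ici_self)
  have hmem (u : ℝ) : max u 0 ∈ Ici (0:ℝ) := mem_Ici.2 (le_max_right u 0)
  rw [← hext lamS1 lam01 lam11, ← hext lamS0 lam00 lam10]
  calc cif (extendIci lamS1) (extendIci lam01) (fun u _ => extendIci lam11 u) t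
      ≤ cif (extendIci lamS0) (extendIci lam00) (fun u _ => extendIci lam11 u) t :=
        cif_markov_anti_lamS_lam0 (continuous_extendIci hS0cont) (continuous_extendIci hS1cont)
          (continuous_extendIci h00cont) (continuous_extendIci h01cont)
          (continuous_extendIci h11cont) (fun u => hSle _ (hmem u)) (fun u => h0le _ (hmem u))
          (fun u => hmod _ (hmem u)) ht
    _ ≤ cif (extendIci lamS0) (extendIci lam00) (fun u _ => extendIci lam10 u) t :=
        cif_markov_mono_lam1 (continuous_extendIci hS0cont) (continuous_extendIci h00cont)
          (continuous_extendIci h10cont) (continuous_extendIci h11cont)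
          (fun u => hS0nn _ (hmem u)) (fun u => h1le _ (hmem u)) ht

/-- sign of the overall effect in the Markov case. If all three hazards
under treatment 1 are pointwise below those under treatment 0, and the intermediate
event increases the terminal hazard under treatment 1, then `F¹(t) ≤ F⁰(t)`. -/
theorem cif_overall_sign_markov (lamS0 lam00 lam10 lamS1 lam01 lam11 : ℝ → ℝ)
    (hS0cont : ContinuousOn lamS0 (Set.Ici 0))
    (h00cont : ContinuousOn lam00 (Set.Ici 0))
    (h10cont : ContinuousOn lam10 (Set.Ici 0))
    (hS1cont : ContinuousOn lamS1 (Set.Ici 0))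
    (h01cont : ContinuousOn lam01 (Set.Ici 0))
    (h11cont : ContinuousOn lam11 (Set.Ici 0))
    (hS0nn : ∀ t ∈ Set.Ici (0:ℝ), 0 ≤ lamS0 t)
    (h00nn : ∀ t ∈ Set.Ici (0:ℝ), 0 ≤ lam00 t)
    (h10nn : ∀ t ∈ Set.Ici (0:ℝ), 0 ≤ lam10 t)
    (hS1nn : ∀ t ∈ Set.Ici (0:ℝ), 0 ≤ lamS1 t)
    (h01nn : ∀ t ∈ Set.Ici (0:ℝ), 0 ≤ lam01 t)
    (h11nn : ∀ t ∈ Set.Ici (0:ℝ), 0 ≤ lam11 t)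
    (hSle : ∀ t ∈ Set.Ici (0:ℝ), lamS1 t ≤ lamS0 t)
    (h0le : ∀ t ∈ Set.Ici (0:ℝ), lam01 t ≤ lam00 t)
    (h1le : ∀ t ∈ Set.Ici (0:ℝ), lam11 t ≤ lam10 t)
    (hmod : ∀ t ∈ Set.Ici (0:ℝ), lam01 t ≤ lam11 t) :
    ∀ t : ℝ, 0 ≤ t →
      cif lamS1 lam01 (fun u _ => lam11 u) t ≤ cif lamS0 lam00 (fun u _ => lam10 u) t :=
  cif_overall_sign_markov_general lamS0 lam00 lam10 lamS1 lam01 lam11 hS0cont h00cont h10cont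
    hS1cont h01cont h11cont hS0nn hSle h0le h1le hmod
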